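/- arXiv:math/9712217 — 6 statements merged into one kernel-verified Lean document; each statement's English description precedes it below -/
import Mathlib

section
/- Let F be a finitely generated free group, Φ : F → F an automorphism, and H a finitely generated subgroup of F with Φ(H) ⊆ H. Then Φ(H) = H; in particular the restriction of Φ to H is an automorphism of H. -/
/-!
If some `h ∈ H` lies outside `Φ(H)`, M. Hall's theorem gives a finite-index subgroup
`K ⊇ Φ(H)` missing `h`: finitely generated subgroups of free groups are separable, because the
partial action of the generators on the finitely many cosets of `Φ(H)` met while reading the
relevant reduced words extends to an action on a finite set. A finitely generated group has
only finitely many homomorphisms to the finite group `Perm (F ⧸ K)`, so some `Φ ^ m` with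
`m ≥ 1` pulls `K` back to itself. But `Φ ^ m h ∈ Φ(H) ⊆ K`, whence `h ∈ K`.
-/

theorem Equiv.Perm.exists_perm_subtype_eq_of_mem {X : Type*} {s : Set X} [Finite s]
    (μ : Equiv.Perm X) : ∃ σ : Equiv.Perm s, ∀ y : s, μ y ∈ s → (σ y : X) = μ y := by
  classical
  let e : {y : s // μ y ∈ s} ≃ {y : s // μ.symm y ∈ s} :=
    { toFun := fun y => ⟨⟨μ y, y.2⟩, by simp⟩
      invFun := fun y => ⟨⟨μ.symm y, y.2⟩, by simp⟩
      left_inv := fun y => by simp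
      right_inv := fun y => by simp }
  exact ⟨e.extendSubtype, fun y hy => by rw [e.extendSubtype_apply_of_mem y hy]; rfl⟩

theorem Subgroup.FG.map {G G' : Type*} [Group G] [Group G'] {H : Subgroup G} (hH : H.FG)
    (f : G →* G') : (H.map f).FG := by
  classical
  obtain ⟨S, rfl⟩ := hH
  exact ⟨S.image f, by rw [Finset.coe_image, MonoidHom.map_closure]⟩

theorem Subgroup.finiteIndex_comap_of_finite {G Q : Type*} [Group G] [Group Q] [Finite Q]
    (K : Subgroup Q) (π : G →* Q) : (K.comap π).FiniteIndex := by
  rw [finiteIndex_iff, index_comap, relIndex]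
  exact FiniteIndex.index_ne_zero

instance MonoidHom.finite_of_fg {G Q : Type*} [Group G] [Group.FG G] [Group Q] [Finite Q] :
    Finite (G →* Q) := by
  obtain ⟨S, hS⟩ := (Group.FG.out : (⊤ : Subgroup G).FG)
  exact Finite.of_injective (fun f : G →* Q => fun s : S => f s) fun f g hfg =>
    MonoidHom.eq_of_eqOn_dense hS fun s hs => congrFun hfg ⟨s, hs⟩

def Subgroup.IsSeparable {G : Type*} [Group G] (H : Subgroup G) : Prop :=
  ∀ x ∉ H, ∃ K : Subgroup G, K.FiniteIndex ∧ H ≤ K ∧ x ∉ K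

namespace FreeGroup

variable {α X : Type*} [MulAction (FreeGroup α) X]

theorem lift_mk_apply_of_suffix_mem {T : Set X} (σ : α → Equiv.Perm T)
    (hσ : ∀ i (y : T), of i • (y : X) ∈ T → (σ i y : X) = of i • (y : X)) (x₀ : T) :
    ∀ l : List (α × Bool), (∀ t, t <:+ l → mk t • (x₀ : X) ∈ T) →
      (lift σ (mk l) x₀ : X) = mk l • (x₀ : X)
  | [], _ => by simp [← one_eq_mk]
  | (i, b) :: l, hl => by
    have ih := lift_mk_apply_of_suffix_mem σ hσ x₀ l fun t ht =>
      hl t (ht.trans (List.suffix_cons _ _))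
    have hsplit : mk ((i, b) :: l) = mk [(i, b)] * mk l := by rw [mul_mk]; rfl
    set y := lift σ (mk l) x₀
    have hmem : mk [(i, b)] • (y : X) ∈ T := by
      rw [ih, smul_smul, ← hsplit]
      exact hl _ List.suffix_rfl
    rw [hsplit, _root_.map_mul, Equiv.Perm.mul_apply, mul_smul, ← ih]
    cases b with
    | true => exact hσ i y hmem
    | false =>
      have hinv : mk [(i, false)] = (of i)⁻¹ := by rw [of, inv_mk]; rfl
      rw [hinv] at hmem ⊢
      have hy : σ i ⟨_, hmem⟩ = y := Subtype.ext (by rw [hσ i _ (by simp), smul_inv_smul])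
      rw [_root_.map_inv, lift_apply_of, Equiv.Perm.inv_eq_iff_eq.mpr hy.symm]

theorem isSeparable_of_fg {H : Subgroup (FreeGroup α)} (hH : H.FG) : H.IsSeparable := by
  classical
  intro x hx
  obtain ⟨S, hS⟩ := hH
  -- the cosets visited while reading the reduced words of `x` and of the generators from the right
  let T : Set (FreeGroup α ⧸ H) := ↑((insert x S).biUnion fun s =>
    (s.toWord.tails.map fun t => (mk t : FreeGroup α ⧸ H)).toFinset)
  have hT : ∀ s ∈ insert x S, ∀ t, t <:+ s.toWord → (mk t : FreeGroup α ⧸ H) ∈ T := by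
    intro s hs t ht
    simp only [T, Finset.coe_biUnion, Set.mem_iUnion, List.coe_toFinset, List.mem_map]
    exact ⟨s, hs, t, (List.mem_tails _ _).mpr ht, rfl⟩
  choose σ hσ using fun i : α =>
    Equiv.Perm.exists_perm_subtype_eq_of_mem (s := T) (MulAction.toPerm (of i : FreeGroup α))
  let x₀ : T := ⟨((1 : FreeGroup α) : FreeGroup α ⧸ H), by
    simpa [← one_eq_mk] using hT x (Finset.mem_insert_self x S) [] List.nil_suffix⟩
  have hlift : ∀ s ∈ insert x S,
      (lift σ s x₀ : FreeGroup α ⧸ H) = s • (x₀ : FreeGroup α ⧸ H) := by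
    intro s hs
    rw [← mk_toWord (x := s)]
    exact lift_mk_apply_of_suffix_mem σ hσ x₀ s.toWord fun t ht => by
      simpa [x₀, MulAction.Quotient.smul_mk] using hT s hs t ht
  let K := (MulAction.stabilizer (Equiv.Perm T) x₀).comap (lift σ)
  have hK : ∀ s ∈ insert x S, s ∈ K ↔ s ∈ H := by
    intro s hs
    rw [← MulAction.stabilizer_quotient H, MulAction.mem_stabilizer_iff, Subgroup.mem_comap,
      MulAction.mem_stabilizer_iff, Equiv.Perm.smul_def, Subtype.ext_iff, hlift s hs]
  refine ⟨K, Subgroup.finiteIndex_comap_of_finite _ _, ?_,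
    fun hxK => hx ((hK x (Finset.mem_insert_self x S)).mp hxK)⟩
  rw [← hS, Subgroup.closure_le]
  intro s hs
  exact (hK s (Finset.mem_insert_of_mem hs)).mpr (hS ▸ Subgroup.subset_closure hs)

end FreeGroup

theorem MonoidHom.exists_pos_comp_pow_eq {G Q : Type*} [Group G] [Group.FG G] [Group Q] [Finite Q]
    (π : G →* Q) (Φ : MulAut G) : ∃ m, 0 < m ∧ π.comp (Φ ^ m).toMonoidHom = π := by
  obtain ⟨a, b, hne, heq⟩ := Finite.exists_ne_map_eq_of_infinite
    fun k : ℕ => π.comp (Φ ^ k).toMonoidHom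
  wlog hab : a < b generalizing a b
  · exact this b a hne.symm heq.symm (by omega)
  refine ⟨b - a, by omega, ?_⟩
  rw [← MonoidHom.cancel_right (f := (Φ ^ a).toMonoidHom) (Φ ^ a).surjective]
  ext g
  simpa [← MulAut.mul_apply, pow_sub_mul_pow Φ hab.le] using (DFunLike.congr_fun heq g).symm

namespace Subgroup

variable {G : Type*} [Group G]

theorem exists_pos_comap_pow_eq [Group.FG G] (K : Subgroup G) [K.FiniteIndex] (Φ : MulAut G) :
    ∃ m, 0 < m ∧ K.comap (Φ ^ m).toMonoidHom = K := by
  obtain ⟨m, hm, hper⟩ := (MulAction.toPermHom G (G ⧸ K)).exists_pos_comp_pow_eq Φ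
  refine ⟨m, hm, ext fun g => ?_⟩
  rw [mem_comap, ← MulAction.stabilizer_quotient K, MulAction.mem_stabilizer_iff,
    MulAction.mem_stabilizer_iff]
  have := DFunLike.congr_fun (DFunLike.congr_fun hper g) ((1 : G) : G ⧸ K)
  simp only [MonoidHom.comp_apply, MulAction.toPermHom_apply, MulAction.toPerm_apply] at this
  rw [this]

theorem pow_apply_mem_of_map_le {H : Subgroup G} {Φ : MulAut G} (hsub : H.map Φ.toMonoidHom ≤ H)
    {h : G} (hh : h ∈ H) (k : ℕ) : (Φ ^ k) h ∈ H := by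
  induction k with
  | zero => exact hh
  | succ k ih => rw [pow_succ', MulAut.mul_apply]; exact hsub (mem_map_of_mem _ ih)

theorem map_eq_of_map_le_of_isSeparable [Group.FG G] (Φ : MulAut G) {H : Subgroup G}
    (hsub : H.map Φ.toMonoidHom ≤ H) (hsep : (H.map Φ.toMonoidHom).IsSeparable) :
    H.map Φ.toMonoidHom = H := by
  refine le_antisymm hsub fun h hh => by_contra fun hnot => ?_
  obtain ⟨K, _, hle, hhK⟩ := hsep h hnot
  obtain ⟨m, hm, hper⟩ := K.exists_pos_comap_pow_eq Φ
  obtain ⟨k, rfl⟩ := Nat.exists_eq_add_one.mpr hm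
  have hmem : (Φ ^ (k + 1)) h ∈ H.map Φ.toMonoidHom := by
    rw [pow_succ', MulAut.mul_apply]
    exact mem_map_of_mem _ (pow_apply_mem_of_map_le hsub hh k)
  exact hhK (hper ▸ hle hmem)

end Subgroup

/-- **Scott's lemma** (Lemma 6.0.6): if `Φ` is an automorphism of a finitely generated
free group `F` and `H` is a finitely generated subgroup with `Φ(H) ⊆ H`,
then `Φ(H) = H`; in particular the restriction of `Φ` to `H` is an automorphism of `H`. -/
theorem stmt0 (n : ℕ) (Φ : FreeGroup (Fin n) ≃* FreeGroup (Fin n))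
    (H : Subgroup (FreeGroup (Fin n))) (hfg : H.FG)
    (hsub : H.map Φ.toMonoidHom ≤ H) :
    H.map Φ.toMonoidHom = H ∧
      ∃ e : H ≃* H, ∀ h : H, (e h : FreeGroup (Fin n)) = Φ (h : FreeGroup (Fin n)) := by
  have hmap : H.map Φ.toMonoidHom = H := Subgroup.map_eq_of_map_le_of_isSeparable Φ hsub
    (FreeGroup.isSeparable_of_fg (hfg.map _))
  exact ⟨hmap, (MulEquiv.subgroupMap Φ H).trans (MulEquiv.subgroupCongr hmap), fun _ => rfl⟩
end

section
/- Suppose a group H acts on a set X, and there exist subsets U⁺, U⁻, V⁺, V⁻ of X, a point x ∈ X, and elements f, g ∈ H such that: (1) x ∉ U⁺ ∪ U⁻ ∪ V⁺ ∪ V⁻; (2) f({x} ∪ U⁺ ∪ V⁺ ∪ V⁻) ⊆ U⁺; (3) f⁻¹({x} ∪ U⁻ ∪ V⁺ ∪ V⁻) ⊆ U⁻; (4) g({x} ∪ U⁺ ∪ U⁻ ∪ V⁺) ⊆ V⁺; (5) g⁻¹({x} ∪ U⁺ ∪ U⁻ ∪ V⁻) ⊆ V⁻. Then the subgroup generated by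 f and g is free of rank 2. -/
/-!
Label the letters of reduced words by sets: `f^{±1}` by `U^±` and `g^{±1}` by `V^±`. The
ping-pong inclusions say that a letter sends `x`, and every set except the one labelling its
inverse, into its own set. By induction along a nonempty reduced word `w`, the point `w • x` lies
in the set labelling the first letter of `w`; since `x` lies in none of the four sets, `w ≠ 1`
in `H`. The four sets need not be disjoint, which is why Mathlib's
`FreeGroup.injective_lift_of_ping_pong` does not apply.
-/

namespace FreeGroup

variable {ι H X : Type*} [Group H] [MulAction H X] {a : ι → H} {S : ι × Bool → Set X} {x : X}

theorem IsReduced.lift_mk_smul_mem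
    (hx : ∀ p, cond p.2 (a p.1) (a p.1)⁻¹ • x ∈ S p)
    (hS : ∀ p q, (p.1 = q.1 → p.2 = q.2) → ∀ y ∈ S q, cond p.2 (a p.1) (a p.1)⁻¹ • y ∈ S p) :
    ∀ {L : List (ι × Bool)}, IsReduced L → ∀ p ∈ L.head?, lift a (mk L) • x ∈ S p
  | [], _, _, hp => by simp at hp
  | [p], _, _, hp => by simpa [lift_mk, Option.mem_some_iff.mp hp] using hx p
  | p :: q :: L, hL, _, hp => by
    obtain rfl := Option.mem_some_iff.mp hp
    rw [isReduced_cons_cons] at hL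
    have hq := IsReduced.lift_mk_smul_mem hx hS hL.2 q rfl
    rw [lift_mk] at hq ⊢
    simpa [mul_smul] using hS _ _ hL.1 _ hq

theorem injective_lift_of_ping_pong_of_basepoint [DecidableEq ι] (hxS : ∀ p, x ∉ S p)
    (hx : ∀ p, cond p.2 (a p.1) (a p.1)⁻¹ • x ∈ S p)
    (hS : ∀ p q, (p.1 = q.1 → p.2 = q.2) → ∀ y ∈ S q, cond p.2 (a p.1) (a p.1)⁻¹ • y ∈ S p) :
    Function.Injective (lift a) := by
  refine (injective_iff_map_eq_one _).mpr fun w hw => ?_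
  by_contra hne
  obtain ⟨p, L, hwL⟩ := List.exists_cons_of_ne_nil (mt toWord_eq_nil_iff.mp hne)
  have hmem := (isReduced_toWord (x := w)).lift_mk_smul_mem hx hS p (by simp [hwL])
  rw [mk_toWord, hw, one_smul] at hmem
  exact hxS p hmem

noncomputable def equivClosureRangeOfInjective (h : Function.Injective (lift a)) :
    FreeGroup ι ≃* Subgroup.closure (Set.range a) :=
  (MonoidHom.ofInjective h).trans (MulEquiv.subgroupCongr range_lift_eq_closure)

end FreeGroup

/-- **Tits ping-pong criterion** (Lemma 3.4.1): if a group `H` acts on a set `X` and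
there are subsets `U⁺, U⁻, V⁺, V⁻`, a point `x`, and elements `f, g` satisfying the
ping-pong inclusions, then the subgroup generated by `f` and `g` is free of rank two. -/
theorem stmt1 {H X : Type*} [Group H] [MulAction H X]
    (Up Um Vp Vm : Set X) (x : X) (f g : H)
    (h1 : x ∉ Up ∪ Um ∪ Vp ∪ Vm)
    (h2 : (f • ·) '' ({x} ∪ Up ∪ Vp ∪ Vm) ⊆ Up)
    (h3 : (f⁻¹ • ·) '' ({x} ∪ Um ∪ Vp ∪ Vm) ⊆ Um)
    (h4 : (g • ·) '' ({x} ∪ Up ∪ Um ∪ Vp) ⊆ Vp)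
    (h5 : (g⁻¹ • ·) '' ({x} ∪ Up ∪ Um ∪ Vm) ⊆ Vm) :
    Nonempty (FreeGroup (Fin 2) ≃* (Subgroup.closure {f, g} : Subgroup H)) := by
  rw [Set.image_subset_iff] at h2 h3 h4 h5
  let S : Fin 2 × Bool → Set X := fun p => cond p.2 (![Up, Vp] p.1) (![Um, Vm] p.1)
  have hinj : Function.Injective (FreeGroup.lift ![f, g]) := by
    refine FreeGroup.injective_lift_of_ping_pong_of_basepoint (S := S) (x := x) ?_ ?_ ?_
    · rintro ⟨i, b⟩ hx
      fin_cases i <;> cases b <;> simp_all [S]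
    · rintro ⟨i, b⟩
      fin_cases i <;> cases b
      exacts [h3 (by simp), h2 (by simp), h5 (by simp), h4 (by simp)]
    · rintro ⟨i, b⟩ ⟨j, c⟩ hij y hy
      fin_cases i <;> fin_cases j <;> cases b <;> cases c <;> simp [S] at hij hy ⊢
      all_goals first
        | exact h2 (by simp [hy]) | exact h3 (by simp [hy])
        | exact h4 (by simp [hy]) | exact h5 (by simp [hy])
  exact ⟨(FreeGroup.equivClosureRangeOfInjective hinj).trans
    (MulEquiv.subgroupCongr (by rw [Matrix.range_cons_cons_empty]))⟩
end

section
/- Suppose a group H acts on a set Y and there are points x, y ∈ Y such that for every ψ ∈ H the set {ψ·x, ψ·y} ∩ {x, y} is nonempty. Then either the stabilizer of x or the stabilizer of y has finite index in H. -/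
/-!
The elements `ψ` with `ψ • x = z` form a left coset of `Stab(x)` (or no elements at all). So the
hypothesis covers `H` by at most four left cosets of `Stab(x)` and `Stab(y)`, and B. H. Neumann's
lemma says that one of the subgroups in a finite coset cover of a group has finite index.
-/

open scoped Pointwise

namespace MulAction

variable {H Y : Type*} [Group H] [MulAction H Y]

theorem exists_setOf_smul_eq_subset_leftCoset (x z : Y) :
    ∃ g : H, {ψ : H | ψ • x = z} ⊆ g • (stabilizer H x : Set H) := by
  by_cases hz : ∃ g : H, g • x = z
  · obtain ⟨g, hg⟩ := hz
    refine ⟨g, fun ψ (hψ : ψ • x = z) => ?_⟩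
    rw [mem_leftCoset_iff, SetLike.mem_coe, mem_stabilizer_iff, mul_smul, hψ, ← hg,
      inv_smul_smul]
  · exact ⟨1, fun ψ (hψ : ψ • x = z) => (hz ⟨ψ, hψ⟩).elim⟩

theorem exists_finiteIndex_stabilizer_of_iUnion_setOf_smul_mem_eq_univ {ι : Type*}
    (s : Finset ι) (x : ι → Y) (t : ι → Finset Y)
    (hcover : ⋃ i ∈ s, {ψ : H | ψ • x i ∈ t i} = Set.univ) :
    ∃ i ∈ s, (stabilizer H (x i)).FiniteIndex := by
  choose g hg using fun p : Σ _ : ι, Y =>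
    exists_setOf_smul_eq_subset_leftCoset (H := H) (x p.1) p.2
  have hcosets : ⋃ p ∈ s.sigma t, g p • (stabilizer H (x p.1) : Set H) = Set.univ := by
    refine Set.eq_univ_of_forall fun ψ => ?_
    obtain ⟨i, hi, hψ⟩ := Set.mem_iUnion₂.mp (hcover ▸ Set.mem_univ ψ)
    exact Set.mem_iUnion₂.mpr ⟨⟨i, ψ • x i⟩, Finset.mem_sigma.mpr ⟨hi, hψ⟩,
      hg ⟨i, ψ • x i⟩ rfl⟩
  obtain ⟨p, hp, hfin⟩ := Subgroup.exists_finiteIndex_of_leftCoset_cover hcosets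
  exact ⟨p.1, (Finset.mem_sigma.mp hp).1, hfin⟩

end MulAction

/-- Lemma 7.0.4: if a group `H` acts on a set `Y` and there are points `x, y` such that
for every `ψ ∈ H` the set `{ψ·x, ψ·y} ∩ {x, y}` is nonempty, then the stabilizer of `x`
or the stabilizer of `y` has finite index in `H`. -/
theorem stmt2 {H Y : Type*} [Group H] [MulAction H Y] (x y : Y)
    (h : ∀ ψ : H, (({ψ • x, ψ • y} : Set Y) ∩ {x, y}).Nonempty) :
    (MulAction.stabilizer H x).FiniteIndex ∨ (MulAction.stabilizer H y).FiniteIndex := by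
  classical
  have hcover : ⋃ i ∈ (Finset.univ : Finset (Fin 2)),
      {ψ : H | ψ • ![x, y] i ∈ ({x, y} : Finset Y)} = Set.univ := by
    refine Set.eq_univ_of_forall fun ψ => ?_
    obtain ⟨z, hψz, hz⟩ := h ψ
    refine Set.mem_iUnion₂.mpr ?_
    rcases hψz with rfl | rfl
    exacts [⟨0, Finset.mem_univ _, by simpa using hz⟩,
      ⟨1, Finset.mem_univ _, by simpa using hz⟩]
  obtain ⟨i, -, hi⟩ :=
    MulAction.exists_finiteIndex_stabilizer_of_iUnion_setOf_smul_mem_eq_univ _ _ _ hcover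
  fin_cases i
  exacts [Or.inl hi, Or.inr hi]
end

section
/- Let F_n be the free group on generators a₁,…,aₙ (n ≥ 1) and let F_{n-1} be the subgroup generated by a₁,…,a_{n-1}. If Φ : F_n → F_n is an automorphism with Φ(F_{n-1}) = F_{n-1}, then the reduced word Φ(aₙ) contains exactly one occurrence of aₙ or aₙ⁻¹. -/
/-!
Let `H` be the subgroup of elements whose reduced words avoid the last generator `t`. As `Φ` is
onto and preserves `H`, the group is generated by `H` and `w = Φ t`, so `t ∈ ⟨H, w⟩`. Strip
`w = x c y` with `x, y ∈ H` and `c` a reduced word beginning and ending with a `t`-letter. Every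
nonzero power of `c` is again of this kind and has at least as many `t`-letters as `c`. Hence every
element of `⟨H, c⟩` can be written as `x₀ c^{k₁} h₁ ⋯ c^{kₘ} hₘ` with `hᵢ ∈ H` so that its reduced
word is the plain concatenation of the pieces: nothing cancels where a `t`-letter meets another
letter. So an element of `⟨H, w⟩` has either no `t`-letter or at least as many as `w`. Since `t`
has exactly one and `w` has at least one (otherwise `⟨H, w⟩ = H`), `w` has exactly one.
-/

theorem List.exists_eq_append_cons_of_exists {β : Type*} {p : β → Prop} :
    ∀ {L : List β}, (∃ a ∈ L, p a) → ∃ P a M, L = P ++ a :: M ∧ (∀ b ∈ P, ¬ p b) ∧ p a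
  | [], ⟨_, ha, _⟩ => absurd ha List.not_mem_nil
  | b :: L, ⟨a, ha, hpa⟩ => by
    by_cases hb : p b
    · exact ⟨[], b, L, rfl, by simp, hb⟩
    · have haL : a ∈ L := (List.mem_cons.1 ha).resolve_left (by rintro rfl; exact hb hpa)
      obtain ⟨P, c, M, rfl, hP, hc⟩ := List.exists_eq_append_cons_of_exists ⟨a, haL, hpa⟩
      exact ⟨b :: P, c, M, rfl, by simpa [hb] using hP, hc⟩

namespace FreeGroup

variable {α : Type*}

theorem IsReduced.append_of_fst_ne {L₁ L₂ : List (α × Bool)} (h₁ : IsReduced L₁)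
    (h₂ : IsReduced L₂) (h : ∀ a ∈ L₁.getLast?, ∀ b ∈ L₂.head?, a.1 ≠ b.1) :
    IsReduced (L₁ ++ L₂) :=
  List.isChain_append.2 ⟨h₁, h₂, fun a ha b hb hab => absurd hab (h a ha b hb)⟩

theorem mk_mem_closure_of_forall_mem {S : Set α} :
    ∀ {L : List (α × Bool)}, (∀ a ∈ L, a.1 ∈ S) → mk L ∈ Subgroup.closure (of '' S)
  | [], _ => Subgroup.one_mem _
  | (i, b) :: L, h => by
    have hi : of i ∈ Subgroup.closure (of '' S) :=
      Subgroup.subset_closure ⟨i, h _ List.mem_cons_self, rfl⟩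
    rw [← List.singleton_append, ← mul_mk]
    refine Subgroup.mul_mem _ ?_ (mk_mem_closure_of_forall_mem fun a ha => h a (by simp [ha]))
    cases b
    · simpa [of, inv_mk, invRev] using Subgroup.inv_mem _ hi
    · exact hi

variable (t : α)

def StartsAndEndsWith (L : List (α × Bool)) : Prop :=
  L.head?.map Prod.fst = some t ∧ L.getLast?.map Prod.fst = some t

variable {t}

theorem startsAndEndsWith_invRev {L : List (α × Bool)} :
    StartsAndEndsWith t (invRev L) ↔ StartsAndEndsWith t L := by
  simp [StartsAndEndsWith, invRev, List.head?_reverse, List.getLast?_reverse,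
    List.getLast?_map, List.head?_map, Option.map_map, Function.comp_def, and_comm]

theorem getLast?_map_fst_ne_of_forall {L : List (α × Bool)} (h : ∀ a ∈ L, a.1 ≠ t) :
    L.getLast?.map Prod.fst ≠ some t := by
  intro hL
  obtain ⟨a, ha, rfl⟩ := Option.map_eq_some_iff.1 hL
  exact h a (List.mem_of_getLast? ha) rfl

theorem exists_eq_append_append_startsAndEndsWith {L : List (α × Bool)}
    (h : ∃ a ∈ L, a.1 = t) : ∃ P C S, L = P ++ C ++ S ∧ (∀ a ∈ P, a.1 ≠ t) ∧
      (∀ a ∈ S, a.1 ≠ t) ∧ StartsAndEndsWith t C := by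
  obtain ⟨P, a, M, rfl, hP, ha⟩ := List.exists_eq_append_cons_of_exists h
  obtain ⟨S, b, N, hN, hS, hb⟩ :=
    List.exists_eq_append_cons_of_exists (p := fun x => x.1 = t) (L := (a :: M).reverse)
      ⟨a, by simp, ha⟩
  have hsplit : a :: M = (N.reverse ++ [b]) ++ S.reverse := by
    rw [← List.reverse_reverse (a :: M), hN]
    simp
  have hhead : (N.reverse ++ [b]).head? = some a := by
    rw [← List.head?_append_of_ne_nil _ (by simp), ← hsplit, List.head?_cons]
  refine ⟨P, N.reverse ++ [b], S.reverse, by rw [hsplit]; simp, hP,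
    by simpa using hS, ?_, ?_⟩
  · rw [hhead, Option.map_some, ha]
  · rw [List.getLast?_concat, Option.map_some, hb]

variable [DecidableEq α]

open reduceCyclically in
theorem toWord_pow_of_ne_zero (x : FreeGroup α) {n : ℕ} (hn : n ≠ 0) :
    (x ^ n).toWord = conjugator x.toWord ++
      (List.replicate n (reduceCyclically x.toWord)).flatten ++ invRev (conjugator x.toWord) := by
  rw [toWord_pow, reduce_flatten_replicate isReduced_toWord, if_neg hn]

open reduceCyclically in
theorem head?_toWord_pow (x : FreeGroup α) {n : ℕ} (hn : n ≠ 0) :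
    (x ^ n).toWord.head? = x.toWord.head? := by
  obtain ⟨m, rfl⟩ := Nat.exists_eq_add_one_of_ne_zero hn
  conv_rhs => rw [← conj_conjugator_reduceCyclically x.toWord]
  rw [toWord_pow_of_ne_zero x hn, List.replicate_succ, List.flatten_cons]
  rcases eq_or_ne (reduceCyclically x.toWord) [] with h | h
  · simp [h]
  · simp [List.head?_append, List.head?_eq_some_head h]

open reduceCyclically in
theorem getLast?_toWord_pow (x : FreeGroup α) {n : ℕ} (hn : n ≠ 0) :
    (x ^ n).toWord.getLast? = x.toWord.getLast? := by
  obtain ⟨m, rfl⟩ := Nat.exists_eq_add_one_of_ne_zero hn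
  conv_rhs => rw [← conj_conjugator_reduceCyclically x.toWord]
  rw [toWord_pow_of_ne_zero x hn, List.replicate_succ', List.flatten_concat]
  rcases eq_or_ne (reduceCyclically x.toWord) [] with h | h
  · simp [h]
  · simp [List.getLast?_append, List.getLast?_eq_some_getLast h]

open reduceCyclically in
theorem countP_toWord_le_countP_toWord_pow (p : α × Bool → Bool) (x : FreeGroup α) {n : ℕ}
    (hn : n ≠ 0) : x.toWord.countP p ≤ (x ^ n).toWord.countP p := by
  conv_lhs => rw [← conj_conjugator_reduceCyclically x.toWord]
  rw [toWord_pow_of_ne_zero x hn]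
  simp only [List.countP_append, List.countP_flatten, List.map_replicate, List.sum_replicate,
    smul_eq_mul]
  have := Nat.le_mul_of_pos_left ((reduceCyclically x.toWord).countP p) (Nat.pos_of_ne_zero hn)
  omega

variable (t) in
def letterCount (x : FreeGroup α) : ℕ := x.toWord.countP fun p => p.1 = t

theorem letterCount_of_self : letterCount t (of t) = 1 := by
  simp [letterCount]

theorem letterCount_of_of_ne {i : α} (h : i ≠ t) : letterCount t (of i) = 0 := by
  simp [letterCount, h]

theorem letterCount_mul_le (x y : FreeGroup α) :
    letterCount t (x * y) ≤ letterCount t x + letterCount t y :=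
  List.countP_append ▸ (toWord_mul_sublist x y).countP_le

theorem countP_invRev (L : List (α × Bool)) :
    (invRev L).countP (fun p => p.1 = t) = L.countP fun p => p.1 = t := by
  simp [invRev, List.countP_map, Function.comp_def]

theorem letterCount_inv (x : FreeGroup α) : letterCount t x⁻¹ = letterCount t x := by
  rw [letterCount, toWord_inv, countP_invRev, letterCount]

theorem StartsAndEndsWith.toWord_zpow {c : FreeGroup α} (hc : StartsAndEndsWith t c.toWord)
    {k : ℤ} (hk : k ≠ 0) : StartsAndEndsWith t (c ^ k).toWord := by
  have hpow {n : ℕ} (hn : n ≠ 0) : StartsAndEndsWith t (c ^ n).toWord := by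
    rwa [StartsAndEndsWith, head?_toWord_pow c hn, getLast?_toWord_pow c hn]
  obtain ⟨n, rfl | rfl⟩ := Int.eq_nat_or_neg k
  · exact zpow_natCast c n ▸ hpow (by omega)
  · rw [zpow_neg, zpow_natCast, toWord_inv, startsAndEndsWith_invRev]
    exact hpow (by omega)

theorem letterCount_le_letterCount_zpow (c : FreeGroup α) {k : ℤ} (hk : k ≠ 0) :
    letterCount t c ≤ letterCount t (c ^ k) := by
  obtain ⟨n, rfl | rfl⟩ := Int.eq_nat_or_neg k
  · rw [zpow_natCast]
    exact countP_toWord_le_countP_toWord_pow _ c (by omega)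
  · rw [zpow_neg, zpow_natCast, letterCount_inv]
    exact countP_toWord_le_countP_toWord_pow _ c (by omega)

variable (t) in
def withoutLetter : Subgroup (FreeGroup α) where
  carrier := {x | letterCount t x = 0}
  one_mem' := rfl
  mul_mem' {x y} hx hy := by
    have := letterCount_mul_le (t := t) x y
    simp_all
  inv_mem' {x} hx := by simpa [letterCount_inv] using hx

theorem mem_withoutLetter {x : FreeGroup α} : x ∈ withoutLetter t ↔ letterCount t x = 0 :=
  Iff.rfl

theorem mem_withoutLetter_iff_forall {x : FreeGroup α} :
    x ∈ withoutLetter t ↔ ∀ a ∈ x.toWord, a.1 ≠ t := by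
  simp [mem_withoutLetter, letterCount, List.countP_eq_zero]

theorem closure_of_ne_eq_withoutLetter :
    Subgroup.closure (of '' {i | i ≠ t}) = withoutLetter t := by
  refine le_antisymm ?_ fun x hx => ?_
  · rw [Subgroup.closure_le]
    rintro _ ⟨i, hi, rfl⟩
    exact letterCount_of_of_ne hi
  · rw [← mk_toWord (x := x)]
    exact mk_mem_closure_of_forall_mem (mem_withoutLetter_iff_forall.1 hx)

theorem toWord_mul_mul_of_startsAndEndsWith {x u h : FreeGroup α}
    (hx : x.toWord.getLast?.map Prod.fst ≠ some t) (hu : StartsAndEndsWith t u.toWord)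
    (hh : h ∈ withoutLetter t) : (x * u * h).toWord = x.toWord ++ u.toWord ++ h.toWord := by
  have hu₀ : u.toWord ≠ [] := by
    rintro h₀
    simp [StartsAndEndsWith, h₀] at hu
  have hred : IsReduced (x.toWord ++ u.toWord ++ h.toWord) := by
    refine (isReduced_toWord.append_of_fst_ne isReduced_toWord ?_).append_of_fst_ne
      isReduced_toWord ?_
    · rintro a ha b hb hab
      apply hx
      rw [ha, Option.map_some, hab, ← Option.map_some, ← hb, hu.1]
    · rintro a ha b hb hab
      rw [List.getLast?_append_of_ne_nil _ hu₀] at ha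
      have hat : some a.1 = some t := by rw [← hu.2, Option.mem_def.1 ha, Option.map_some]
      exact mem_withoutLetter_iff_forall.1 hh b (List.mem_of_mem_head? hb)
        (hab ▸ Option.some_injective _ hat)
  rw [← hred.reduce_eq, ← toWord_mk, ← mul_mk, ← mul_mk, mk_toWord, mk_toWord, mk_toWord]

theorem exists_eq_mul_mul_startsAndEndsWith {w : FreeGroup α} (hw : letterCount t w ≠ 0) :
    ∃ x c y, x ∈ withoutLetter t ∧ y ∈ withoutLetter t ∧ StartsAndEndsWith t c.toWord ∧
      letterCount t c = letterCount t w ∧ w = x * c * y := by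
  obtain ⟨P, C, S, hw', hP, hS, hC⟩ := exists_eq_append_append_startsAndEndsWith (t := t)
    (L := w.toWord) (by simpa using List.countP_pos_iff.1 (Nat.pos_of_ne_zero hw))
  have hred : IsReduced (P ++ C ++ S) := hw' ▸ isReduced_toWord
  have toWord_mk_of_infix {L : List (α × Bool)} (h : L <:+: P ++ C ++ S) : (mk L).toWord = L :=
    (hred.infix h).reduce_eq
  have hPw : (mk P).toWord = P := toWord_mk_of_infix ⟨[], C ++ S, by simp⟩
  have hCw : (mk C).toWord = C := toWord_mk_of_infix ⟨P, S, rfl⟩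
  have hSw : (mk S).toWord = S := toWord_mk_of_infix ⟨P ++ C, [], by simp⟩
  have hP₀ : P.countP (fun p => p.1 = t) = 0 :=
    List.countP_eq_zero.2 fun a ha => by simpa using hP a ha
  have hS₀ : S.countP (fun p => p.1 = t) = 0 :=
    List.countP_eq_zero.2 fun a ha => by simpa using hS a ha
  refine ⟨mk P, mk C, mk S, ?_, ?_, by rwa [hCw], ?_, ?_⟩
  · rwa [mem_withoutLetter_iff_forall, hPw]
  · rwa [mem_withoutLetter_iff_forall, hSw]
  · rw [letterCount, letterCount, hCw, hw', List.countP_append, List.countP_append, hP₀, hS₀]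
    omega
  · rw [mul_mk, mul_mk, ← hw', mk_toWord]

variable (t) in
inductive IsAlternating (c : FreeGroup α) : FreeGroup α → Prop
  | of_mem {x : FreeGroup α} : x ∈ withoutLetter t → IsAlternating c x
  | mul_zpow_mul {x h : FreeGroup α} {k : ℤ} : IsAlternating c x →
      x.toWord.getLast?.map Prod.fst ≠ some t → k ≠ 0 → h ∈ withoutLetter t →
      IsAlternating c (x * c ^ k * h)

namespace IsAlternating

variable {c g : FreeGroup α}

theorem letterCount_eq_zero_or_le (hc : StartsAndEndsWith t c.toWord) :
    IsAlternating t c g → letterCount t g = 0 ∨ letterCount t c ≤ letterCount t g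
  | of_mem hx => .inl hx
  | @mul_zpow_mul _ _ _ _ x h k _ hx hk hh => by
    right
    have hword := toWord_mul_mul_of_startsAndEndsWith hx (hc.toWord_zpow hk) hh
    have hcount : letterCount t (c ^ k) ≤ letterCount t (x * c ^ k * h) := by
      simp only [letterCount, hword, List.countP_append]
      omega
    exact (letterCount_le_letterCount_zpow c hk).trans hcount

theorem mul_mem (hg : IsAlternating t c g) {h : FreeGroup α} (hh : h ∈ withoutLetter t) :
    IsAlternating t c (g * h) := by
  cases hg with
  | of_mem hx => exact of_mem (Subgroup.mul_mem _ hx hh)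
  | mul_zpow_mul hx hlast hk hh' =>
    rw [mul_assoc]
    exact mul_zpow_mul hx hlast hk (Subgroup.mul_mem _ hh' hh)

theorem mul_zpow (hc : StartsAndEndsWith t c.toWord) (hg : IsAlternating t c g) (e : ℤ) :
    IsAlternating t c (g * c ^ e) := by
  rcases eq_or_ne e 0 with rfl | he
  · simpa using hg
  cases hg with
  | of_mem hx =>
    simpa using mul_zpow_mul (of_mem hx) (getLast?_map_fst_ne_of_forall
      (mem_withoutLetter_iff_forall.1 hx)) he (Subgroup.one_mem _)
  | @mul_zpow_mul x h k hx hlast hk hh =>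
    rcases eq_or_ne h 1 with rfl | hh₁
    · rw [mul_one, mul_assoc, ← zpow_add]
      rcases eq_or_ne (k + e) 0 with hke | hke
      · simpa [hke] using hx
      · simpa using mul_zpow_mul hx hlast hke (Subgroup.one_mem _)
    · have hlast' : (x * c ^ k * h).toWord.getLast?.map Prod.fst ≠ some t := by
        rw [toWord_mul_mul_of_startsAndEndsWith hlast (hc.toWord_zpow hk) hh,
          List.getLast?_append_of_ne_nil _ (by simpa using hh₁)]
        exact getLast?_map_fst_ne_of_forall (mem_withoutLetter_iff_forall.1 hh)
      simpa using mul_zpow_mul (mul_zpow_mul hx hlast hk hh) hlast' he (Subgroup.one_mem _)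

theorem of_mem_closure (hc : StartsAndEndsWith t c.toWord)
    (hg : g ∈ Subgroup.closure (withoutLetter t ∪ {c})) : IsAlternating t c g := by
  induction hg using Subgroup.closure_induction_right with
  | one => exact of_mem (Subgroup.one_mem _)
  | mul_right x _ y hy ih =>
    rcases hy with hy | rfl
    · exact ih.mul_mem hy
    · simpa using ih.mul_zpow hc 1
  | mul_inv_cancel x _ y hy ih =>
    rcases hy with hy | rfl
    · exact ih.mul_mem (Subgroup.inv_mem _ hy)
    · simpa using ih.mul_zpow hc (-1)

end IsAlternating

theorem letterCount_eq_zero_or_le_of_mem_closure {w g : FreeGroup α}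
    (hg : g ∈ Subgroup.closure (withoutLetter t ∪ {w})) :
    letterCount t g = 0 ∨ letterCount t w ≤ letterCount t g := by
  rcases eq_or_ne (letterCount t w) 0 with hw | hw
  · exact .inr (hw ▸ Nat.zero_le _)
  obtain ⟨x, c, y, hx, hy, hc, hcw, rfl⟩ := exists_eq_mul_mul_startsAndEndsWith hw
  have hle : Subgroup.closure (withoutLetter t ∪ {x * c * y}) ≤
      Subgroup.closure (withoutLetter t ∪ {c}) := by
    have hsub {z : FreeGroup α} (hz : z ∈ (withoutLetter t : Set (FreeGroup α)) ∪ {c}) :=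
      Subgroup.subset_closure hz
    refine (Subgroup.closure_le _).2 (Set.union_subset (fun z hz => hsub (.inl hz)) ?_)
    rw [Set.singleton_subset_iff]
    exact Subgroup.mul_mem _ (Subgroup.mul_mem _ (hsub (.inl hx)) (hsub (.inr rfl)))
      (hsub (.inl hy))
  rw [← hcw]
  exact (IsAlternating.of_mem_closure hc (hle hg)).letterCount_eq_zero_or_le hc

theorem letterCount_eq_one_of_of_mem_closure {w : FreeGroup α}
    (h : of t ∈ Subgroup.closure (withoutLetter t ∪ {w})) : letterCount t w = 1 := by
  have hw₀ : letterCount t w ≠ 0 := fun hw => by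
    have hle : Subgroup.closure (withoutLetter t ∪ {w}) ≤ withoutLetter t :=
      (Subgroup.closure_le _).2 (Set.union_subset subset_rfl (Set.singleton_subset_iff.2 hw))
    simpa [mem_withoutLetter, letterCount_of_self] using hle h
  have := letterCount_eq_zero_or_le_of_mem_closure h
  rw [letterCount_of_self] at this
  omega

theorem closure_withoutLetter_union_singleton_of_eq_top :
    Subgroup.closure (withoutLetter t ∪ {of t}) = ⊤ := by
  rw [eq_top_iff, ← closure_range_of, Subgroup.closure_le]
  rintro _ ⟨i, rfl⟩
  apply Subgroup.subset_closure
  rcases eq_or_ne i t with rfl | hi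
  · exact .inr rfl
  · exact .inl (letterCount_of_of_ne hi)

end FreeGroup

/-- Lemma 3.2.1: Let `F_{n+1}` be the free group on generators `a₀, …, aₙ` and let `Fₙ`
be the subgroup generated by all generators except the last one.  If `Φ` is an
automorphism of `F_{n+1}` leaving `Fₙ` invariant, then the reduced word of `Φ(aₙ)`
contains exactly one occurrence of the last generator or its inverse. -/
theorem stmt3 (n : ℕ) (Φ : FreeGroup (Fin (n + 1)) ≃* FreeGroup (Fin (n + 1)))
    (hinv : (Subgroup.closure (FreeGroup.of '' {i : Fin (n + 1) | i ≠ Fin.last n})).map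
        Φ.toMonoidHom = Subgroup.closure (FreeGroup.of '' {i : Fin (n + 1) | i ≠ Fin.last n})) :
    ((Φ (FreeGroup.of (Fin.last n))).toWord.countP fun p => p.1 = Fin.last n) = 1 := by
  rw [FreeGroup.closure_of_ne_eq_withoutLetter] at hinv
  have htop : Subgroup.closure
      (FreeGroup.withoutLetter (Fin.last n) ∪ {Φ (FreeGroup.of (Fin.last n))}) = ⊤ := by
    rw [← Subgroup.map_top_of_surjective Φ.toMonoidHom Φ.surjective,
      ← FreeGroup.closure_withoutLetter_union_singleton_of_eq_top, MonoidHom.map_closure,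
      Set.image_union, ← Subgroup.coe_map, hinv, Set.image_singleton]
    rfl
  exact FreeGroup.letterCount_eq_one_of_of_mem_closure (htop ▸ Subgroup.mem_top _)
end

section
/- Let G be a finite graph, G_{r-1} ⊆ G_r ⊆ G subgraphs with G_r connected, m ≥ 2 the number of components of G_{r-1}, and suppose rank H₁(G_r) ≥ rank H₁(G_{r-1}) + 1 when m = 2. Let G̃ → G be a regular k-fold cover such that the preimage G̃_{r-1} of G_{r-1} has at most (k/k₁)·m components where k₁ > m divides k. Then rank H₁(G̃_r) − rank H₁(G̃_{r-1}) > k, where G̃_r is the preimage of G_r. -/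
/-- Number of connected components of the subgraph with vertex set `A` and edge set `B`
of a graph given by source/target maps `s t : E → V`. -/
noncomputable def comps {V E : Type*} (s t : E → V) (A : Set V) (B : Set E) : ℕ :=
  Nat.card (Quot fun u v : A =>
    ∃ e ∈ B, (s e = (u : V) ∧ t e = (v : V)) ∨ (s e = (v : V) ∧ t e = (u : V)))

/-- `rank H₁` of the subgraph `(A, B)`: `#edges − #vertices + #components` (as an
integer). -/
noncomputable def rkH1 {V E : Type*} (s t : E → V) (A : Set V) (B : Set E) : ℤ :=
  (Nat.card B : ℤ) - Nat.card A + comps s t A B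

/-- Cardinality of a preimage under a map with constant fiber size `k`. -/
lemma aux_card_preimage {V' V : Type*} [Finite V'] (pV : V' → V) (k : ℕ)
    (hfib : ∀ v, Nat.card {x // pV x = v} = k) (A : Set V) :
    Nat.card (pV ⁻¹' A) = k * Nat.card A := by
  classical
  set q : ↥(pV ⁻¹' A) → ↥A := fun x => ⟨pV x.1, x.2⟩ with hq
  have efib : ∀ v : A, {x : ↥(pV ⁻¹' A) // q x = v} ≃ {x : V' // pV x = (v : V)} := by
    intro v
    refine ⟨fun x => ⟨x.1.1, congrArg Subtype.val x.2⟩,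
      fun y => ⟨⟨y.1, by simp [Set.mem_preimage, y.2, v.2]⟩, Subtype.ext y.2⟩, ?_, ?_⟩
    · intro x; rfl
    · intro y; rfl
  have e1 : ↥(pV ⁻¹' A) ≃ Σ v : A, {x : ↥(pV ⁻¹' A) // q x = v} :=
    (Equiv.sigmaFiberEquiv q).symm
  have e2 : (Σ v : A, {x : ↥(pV ⁻¹' A) // q x = v}) ≃ A × Fin k :=
    (Equiv.sigmaCongrRight fun v =>
      (efib v).trans (Finite.equivFinOfCardEq (hfib (v : V)))).trans
      (Equiv.sigmaEquivProd _ _)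
  rw [Nat.card_congr (e1.trans e2), Nat.card_prod]
  simp [mul_comm]

/-- Adding one (unordered) pair to a relation decreases the number of classes by at
most one. -/
lemma aux_quot_insert {α : Type*} [Finite α] (r : α → α → Prop) (p₀ q₀ : α) :
    Nat.card (Quot r) ≤
      Nat.card (Quot fun a b => r a b ∨ (a = p₀ ∧ b = q₀) ∨ (a = q₀ ∧ b = p₀)) + 1 := by
  classical
  set r' : α → α → Prop := fun a b => r a b ∨ (a = p₀ ∧ b = q₀) ∨ (a = q₀ ∧ b = p₀) with hr'
  have key : ∀ a b : α, Relation.EqvGen r' a b → (Quot.mk r a = Quot.mk r b) ∨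
      ((Quot.mk r a = Quot.mk r p₀ ∨ Quot.mk r a = Quot.mk r q₀) ∧
       (Quot.mk r b = Quot.mk r p₀ ∨ Quot.mk r b = Quot.mk r q₀)) := by
    intro a b h
    induction h with
    | rel a b hab =>
      rcases hab with h | ⟨h1, h2⟩ | ⟨h1, h2⟩
      · exact Or.inl (Quot.sound h)
      · subst h1; subst h2; exact Or.inr ⟨Or.inl rfl, Or.inr rfl⟩
      · subst h1; subst h2; exact Or.inr ⟨Or.inr rfl, Or.inl rfl⟩
    | refl a => exact Or.inl rfl
    | symm a b _ ih => tauto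
    | trans a b c _ _ ih1 ih2 =>
      rcases ih1 with h1 | ⟨ha, hb⟩
      · rcases ih2 with h2 | ⟨hb', hc⟩
        · exact Or.inl (h1.trans h2)
        · exact Or.inr ⟨by rw [h1]; exact hb', hc⟩
      · rcases ih2 with h2 | ⟨hb', hc⟩
        · exact Or.inr ⟨ha, by rw [← h2]; exact hb⟩
        · exact Or.inr ⟨ha, hc⟩
  set g : Quot r → Quot r' :=
    Quot.lift (Quot.mk r') (fun a b h => Quot.sound (Or.inl h)) with hg
  set P : Quot r := Quot.mk r p₀ with hP
  set Q : Quot r := Quot.mk r q₀ with hQ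
  let f : Quot r → Quot r' ⊕ Unit :=
    fun x => if x = Q ∧ P ≠ Q then Sum.inr () else Sum.inl (g x)
  have hginj : ∀ x y : Quot r, g x = g y → x = y ∨
      ((x = P ∨ x = Q) ∧ (y = P ∨ y = Q)) := by
    intro x y
    induction x using Quot.ind with | _ a =>
    induction y using Quot.ind with | _ b =>
    intro hxy
    have : Relation.EqvGen r' a b := Quot.eq.mp hxy
    exact key a b this
  have hinj : Function.Injective f := by
    intro x y hxy
    by_cases hx : x = Q ∧ P ≠ Q <;> by_cases hy : y = Q ∧ P ≠ Q
    · exact hx.1.trans hy.1.symm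
    · rw [show f x = Sum.inr () from if_pos hx, show f y = Sum.inl (g y) from if_neg hy] at hxy
      exact absurd hxy (by simp)
    · rw [show f x = Sum.inl (g x) from if_neg hx, show f y = Sum.inr () from if_pos hy] at hxy
      exact absurd hxy (by simp)
    · rw [show f x = Sum.inl (g x) from if_neg hx, show f y = Sum.inl (g y) from if_neg hy] at hxy
      rcases hginj x y (Sum.inl.inj hxy) with h | ⟨h1, h2⟩
      · exact h
      · -- if P = Q then x = P = y; otherwise x ≠ Q and y ≠ Q so x = P = y
        by_cases hPQ : P = Q
        · rcases h1 with h1 | h1 <;> rcases h2 with h2 | h2 <;>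
            simp [h1, h2, hPQ]
        · have hx' : x = P := by tauto
          have hy' : y = P := by tauto
          rw [hx', hy']
  calc Nat.card (Quot r) ≤ Nat.card (Quot r' ⊕ Unit) :=
        Nat.card_le_card_of_injective f hinj
    _ = Nat.card (Quot r') + 1 := by rw [Nat.card_sum]; simp

/-- Adding a finite set of pairs decreases the number of classes by at most the number
of pairs added. -/
lemma aux_quot_union {α ι : Type*} [Finite α] [DecidableEq ι] (g : ι → α × α)
    (F : Finset ι) (D : Finset ι) :
    Nat.card (Quot fun u v : α => ∃ i ∈ F, g i = (u, v) ∨ g i = (v, u)) ≤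
      Nat.card (Quot fun u v : α => ∃ i ∈ F ∪ D, g i = (u, v) ∨ g i = (v, u)) + D.card := by
  classical
  induction D using Finset.induction with
  | empty => simp
  | @insert a D ha ih =>
    have hiff : ∀ u v : α, (∃ i ∈ F ∪ insert a D, g i = (u, v) ∨ g i = (v, u)) ↔
        ((∃ i ∈ F ∪ D, g i = (u, v) ∨ g i = (v, u)) ∨
          (u = (g a).1 ∧ v = (g a).2) ∨ (u = (g a).2 ∧ v = (g a).1)) := by
      intro u v
      constructor
      · rintro ⟨i, hi, hgi⟩
        rcases Finset.mem_union.mp hi with hi | hi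
        · exact Or.inl ⟨i, Finset.mem_union_left _ hi, hgi⟩
        · rcases Finset.mem_insert.mp hi with rfl | hi
          · rcases hgi with h | h
            · exact Or.inr (Or.inl ⟨by rw [h], by rw [h]⟩)
            · exact Or.inr (Or.inr ⟨by rw [h], by rw [h]⟩)
          · exact Or.inl ⟨i, Finset.mem_union_right _ hi, hgi⟩
      · rintro (⟨i, hi, hgi⟩ | ⟨h1, h2⟩ | ⟨h1, h2⟩)
        · refine ⟨i, ?_, hgi⟩
          rcases Finset.mem_union.mp hi with hi | hi
          · exact Finset.mem_union_left _ hi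
          · exact Finset.mem_union_right _ (Finset.mem_insert_of_mem hi)
        · exact ⟨a, Finset.mem_union_right _ (Finset.mem_insert_self _ _),
            Or.inl (by rw [h1, h2])⟩
        · exact ⟨a, Finset.mem_union_right _ (Finset.mem_insert_self _ _),
            Or.inr (by rw [h1, h2])⟩
    have hcongr : Nat.card (Quot fun u v : α =>
          ((∃ i ∈ F ∪ D, g i = (u, v) ∨ g i = (v, u)) ∨
            (u = (g a).1 ∧ v = (g a).2) ∨ (u = (g a).2 ∧ v = (g a).1))) =
        Nat.card (Quot fun u v : α => ∃ i ∈ F ∪ insert a D, g i = (u, v) ∨ g i = (v, u)) :=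
      Nat.card_congr (Quot.congrRight fun u v => (hiff u v).symm)
    have h1 := aux_quot_insert (fun u v : α => ∃ i ∈ F ∪ D, g i = (u, v) ∨ g i = (v, u))
      (g a).1 (g a).2
    rw [hcongr] at h1
    rw [Finset.card_insert_of_notMem ha]
    omega

/-- Each component of `(A,B)` is positive. -/
lemma aux_comps_pos {V E : Type*} [Finite V] (s t : E → V) (A : Set V) (B : Set E)
    (h : A.Nonempty) : 1 ≤ comps s t A B := by
  obtain ⟨a, ha⟩ := h
  unfold comps
  haveI : Nonempty (Quot fun u v : A =>
      ∃ e ∈ B, (s e = (u : V) ∧ t e = (v : V)) ∨ (s e = (v : V) ∧ t e = (u : V))) :=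
    ⟨Quot.mk _ ⟨a, ha⟩⟩
  exact Nat.card_pos

/-- Enlarging the vertex set by vertices not touched by any edge adds exactly that many
components. -/
lemma aux_comps_vertex {V E : Type*} [Finite V] (s t : E → V) (A₁ A₂ : Set V) (B : Set E)
    (hA : A₁ ⊆ A₂) (hcl : ∀ e ∈ B, s e ∈ A₁ ∧ t e ∈ A₁) :
    comps s t A₂ B + Nat.card A₁ = comps s t A₁ B + Nat.card A₂ := by
  classical
  set r₁ : A₁ → A₁ → Prop := fun u v =>
    ∃ e ∈ B, (s e = (u : V) ∧ t e = (v : V)) ∨ (s e = (v : V) ∧ t e = (u : V)) with hr₁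
  set r₂ : A₂ → A₂ → Prop := fun u v =>
    ∃ e ∈ B, (s e = (u : V) ∧ t e = (v : V)) ∨ (s e = (v : V) ∧ t e = (u : V)) with hr₂
  have hmem : ∀ (u v : A₂), r₂ u v → (u : V) ∈ A₁ ∧ (v : V) ∈ A₁ := by
    rintro u v ⟨e, he, h | h⟩
    · exact ⟨h.1 ▸ (hcl e he).1, h.2 ▸ (hcl e he).2⟩
    · exact ⟨h.2 ▸ (hcl e he).2, h.1 ▸ (hcl e he).1⟩
  have hsound : ∀ (u v : A₂), r₂ u v →
      (if h : (u : V) ∈ A₁ then (Sum.inl (Quot.mk r₁ ⟨u, h⟩) : Quot r₁ ⊕ ↥(A₂ \ A₁))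
        else Sum.inr ⟨u, ⟨u.2, h⟩⟩) =
      (if h : (v : V) ∈ A₁ then Sum.inl (Quot.mk r₁ ⟨v, h⟩) else Sum.inr ⟨v, ⟨v.2, h⟩⟩) := by
    intro u v huv
    obtain ⟨hu, hv⟩ := hmem u v huv
    rw [dif_pos hu, dif_pos hv]
    refine congrArg Sum.inl (Quot.sound ?_)
    obtain ⟨e, he, h⟩ := huv
    exact ⟨e, he, h⟩
  let f : Quot r₂ → Quot r₁ ⊕ ↥(A₂ \ A₁) := Quot.lift _ hsound
  have hlift : ∀ u v : A₁, Relation.EqvGen r₁ u v →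
      Quot.mk r₂ ⟨(u : V), hA u.2⟩ = Quot.mk r₂ ⟨(v : V), hA v.2⟩ := by
    intro u v h
    induction h with
    | rel a b hab => obtain ⟨e, he, h⟩ := hab; exact Quot.sound ⟨e, he, h⟩
    | refl a => rfl
    | symm a b _ ih => exact ih.symm
    | trans a b c _ _ ih1 ih2 => exact ih1.trans ih2
  have hbij : Function.Bijective f := by
    constructor
    · intro x y
      induction x using Quot.ind with | _ a =>
      induction y using Quot.ind with | _ b =>
      intro hxy
      by_cases ha : (a : V) ∈ A₁ <;> by_cases hb : (b : V) ∈ A₁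
      · rw [show f (Quot.mk r₂ a) = Sum.inl (Quot.mk r₁ ⟨a, ha⟩) from dif_pos ha,
          show f (Quot.mk r₂ b) = Sum.inl (Quot.mk r₁ ⟨b, hb⟩) from dif_pos hb] at hxy
        have h := hlift _ _ (Quot.eq.mp (Sum.inl.inj hxy))
        exact h
      · rw [show f (Quot.mk r₂ a) = Sum.inl (Quot.mk r₁ ⟨a, ha⟩) from dif_pos ha,
          show f (Quot.mk r₂ b) = Sum.inr ⟨b, ⟨b.2, hb⟩⟩ from dif_neg hb] at hxy
        exact absurd hxy (by simp)
      · rw [show f (Quot.mk r₂ a) = Sum.inr ⟨a, ⟨a.2, ha⟩⟩ from dif_neg ha,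
          show f (Quot.mk r₂ b) = Sum.inl (Quot.mk r₁ ⟨b, hb⟩) from dif_pos hb] at hxy
        exact absurd hxy (by simp)
      · rw [show f (Quot.mk r₂ a) = Sum.inr ⟨a, ⟨a.2, ha⟩⟩ from dif_neg ha,
          show f (Quot.mk r₂ b) = Sum.inr ⟨b, ⟨b.2, hb⟩⟩ from dif_neg hb] at hxy
        injection hxy with h
        have hval := congrArg (Subtype.val : ↥(A₂ \ A₁) → V) h
        exact congrArg (Quot.mk r₂) (Subtype.ext hval)
    · rintro (q | d)
      · induction q using Quot.ind with | _ a =>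
        exact ⟨Quot.mk r₂ ⟨(a : V), hA a.2⟩, dif_pos a.2⟩
      · exact ⟨Quot.mk r₂ ⟨(d : V), d.2.1⟩, dif_neg d.2.2⟩
  have hq : comps s t A₂ B = comps s t A₁ B + Nat.card ↥(A₂ \ A₁) := by
    have h := Nat.card_congr (Equiv.ofBijective f hbij)
    rw [Nat.card_sum] at h
    exact h
  have hA' : Nat.card ↥(A₂ \ A₁) + Nat.card A₁ = Nat.card A₂ := by
    rw [Nat.card_coe_set_eq, Nat.card_coe_set_eq, Nat.card_coe_set_eq]
    exact Set.ncard_diff_add_ncard_of_subset hA (Set.toFinite _)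
  omega

/-- Monotonicity in the edge set: each added edge kills at most one component. -/
lemma aux_comps_mono {V E : Type*} [Finite V] [Finite E] (s t : E → V) (A : Set V)
    (B₁ B₂ : Set E) (hB : B₁ ⊆ B₂) (hcl : ∀ e ∈ B₂, s e ∈ A ∧ t e ∈ A) :
    comps s t A B₁ + Nat.card B₁ ≤ comps s t A B₂ + Nat.card B₂ := by
  classical
  rcases isEmpty_or_nonempty ↥A with hA0 | hA1
  · have h1 : comps s t A B₁ = 0 := by
      unfold comps
      haveI : IsEmpty (Quot fun u v : A =>
          ∃ e ∈ B₁, (s e = (u : V) ∧ t e = (v : V)) ∨ (s e = (v : V) ∧ t e = (u : V))) :=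
        ⟨fun q => @Quot.ind _ _ (fun _ => False) (fun a => (hA0.false a).elim) q⟩
      exact Nat.card_of_isEmpty
    have h2 : Nat.card B₁ ≤ Nat.card B₂ := by
      rw [Nat.card_coe_set_eq, Nat.card_coe_set_eq]
      exact Set.ncard_le_ncard hB (Set.toFinite _)
    omega
  · obtain ⟨a₀⟩ := hA1
    let g : E → ↥A × ↥A := fun e =>
      if h : s e ∈ A ∧ t e ∈ A then (⟨s e, h.1⟩, ⟨t e, h.2⟩) else (a₀, a₀)
    set F₁ := (Set.toFinite B₁).toFinset with hF₁
    set F₂ := (Set.toFinite B₂).toFinset with hF₂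
    have hF : F₁ ⊆ F₂ := by
      intro e he
      rw [Set.Finite.mem_toFinset] at he ⊢
      exact hB he
    have hmatch : ∀ (B : Set E) (F : Finset E), (∀ e, e ∈ F ↔ e ∈ B) → B ⊆ B₂ →
        ∀ u v : A, (∃ e ∈ B, (s e = (u : V) ∧ t e = (v : V)) ∨
          (s e = (v : V) ∧ t e = (u : V))) ↔ (∃ i ∈ F, g i = (u, v) ∨ g i = (v, u)) := by
      intro B F hFB hBB u v
      constructor
      · rintro ⟨e, he, h⟩
        have heA := hcl e (hBB he)
        refine ⟨e, (hFB e).mpr he, ?_⟩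
        rw [show g e = (⟨s e, heA.1⟩, ⟨t e, heA.2⟩) from dif_pos heA]
        rcases h with ⟨h1, h2⟩ | ⟨h1, h2⟩
        · exact Or.inl (Prod.ext (Subtype.ext h1) (Subtype.ext h2))
        · exact Or.inr (Prod.ext (Subtype.ext h1) (Subtype.ext h2))
      · rintro ⟨i, hi, h⟩
        have hiB : i ∈ B := (hFB i).mp hi
        have hiA := hcl i (hBB hiB)
        rw [show g i = (⟨s i, hiA.1⟩, ⟨t i, hiA.2⟩) from dif_pos hiA] at h
        refine ⟨i, hiB, ?_⟩
        rcases h with h | h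
        · exact Or.inl ⟨congrArg Subtype.val (congrArg Prod.fst h),
            congrArg Subtype.val (congrArg Prod.snd h)⟩
        · exact Or.inr ⟨congrArg Subtype.val (congrArg Prod.fst h),
            congrArg Subtype.val (congrArg Prod.snd h)⟩
    have e₁ : comps s t A B₁ =
        Nat.card (Quot fun u v : A => ∃ i ∈ F₁, g i = (u, v) ∨ g i = (v, u)) :=
      Nat.card_congr (Quot.congrRight
        (hmatch B₁ F₁ (fun e => Set.Finite.mem_toFinset _) hB))
    have e₂ : comps s t A B₂ =
        Nat.card (Quot fun u v : A => ∃ i ∈ F₂, g i = (u, v) ∨ g i = (v, u)) :=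
      Nat.card_congr (Quot.congrRight
        (hmatch B₂ F₂ (fun e => Set.Finite.mem_toFinset _) le_rfl))
    have hunion : F₁ ∪ (F₂ \ F₁) = F₂ := Finset.union_sdiff_of_subset hF
    have hineq := aux_quot_union g F₁ (F₂ \ F₁)
    rw [hunion] at hineq
    have hcard : (F₂ \ F₁).card + F₁.card = F₂.card :=
      Finset.card_sdiff_add_card_eq_card hF
    have hB₁ : Nat.card B₁ = F₁.card := by
      rw [Nat.card_coe_set_eq, Set.ncard_eq_toFinset_card]
    have hB₂ : Nat.card B₂ = F₂.card := by
      rw [Nat.card_coe_set_eq, Set.ncard_eq_toFinset_card]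
    omega

/-- Lemma 7.0.5 (displayed computation): let `G_{r-1} ⊆ G_r ⊆ G` be subgraphs of a finite
graph with `G_r` connected, `m ≥ 2` the number of components of `G_{r-1}`, and
`rank H₁(G_r) ≥ rank H₁(G_{r-1}) + 1` when `m = 2`.  If `G̃ → G` is a regular `k`-fold
cover such that the preimage `G̃_{r-1}` has at most `(k/k₁)·m` components, where
`k₁ > m` divides `k`, then `rank H₁(G̃_r) − rank H₁(G̃_{r-1}) > k`. -/
theorem stmt9 (V E V' E' : Type) [Fintype V] [Fintype E] [Fintype V'] [Fintype E']
    (s t : E → V) (s' t' : E' → V') (pV : V' → V) (pE : E' → E)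
    (k k₁ m : ℕ) (hk : 0 < k)
    -- `(pV, pE)` is a regular `k`-fold covering:
    (hps : ∀ e, s (pE e) = pV (s' e)) (hpt : ∀ e, t (pE e) = pV (t' e))
    (hfibV : ∀ v, Nat.card {x // pV x = v} = k)
    (hfibE : ∀ e, Nat.card {x // pE x = e} = k)
    (hlocal : ∀ v : V', Set.BijOn pE {e | s' e = v} {e | s e = pV v} ∧
        Set.BijOn pE {e | t' e = v} {e | t e = pV v})
    (hreg : ∀ v₁ v₂ : V', pV v₁ = pV v₂ → ∃ (φV : V' ≃ V') (φE : E' ≃ E'),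
        (∀ x, pV (φV x) = pV x) ∧ (∀ e, pE (φE e) = pE e) ∧
        (∀ e, s' (φE e) = φV (s' e)) ∧ (∀ e, t' (φE e) = φV (t' e)) ∧ φV v₁ = v₂)
    -- the nested subgraphs `G_{r-1} = (A₁, B₁) ⊆ G_r = (A₂, B₂)`:
    (A₁ A₂ : Set V) (B₁ B₂ : Set E)
    (hA : A₁ ⊆ A₂) (hB : B₁ ⊆ B₂)
    (hcl₁ : ∀ e ∈ B₁, s e ∈ A₁ ∧ t e ∈ A₁)
    (hcl₂ : ∀ e ∈ B₂, s e ∈ A₂ ∧ t e ∈ A₂)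
    -- `G_r` is connected and `G_{r-1}` has `m ≥ 2` components:
    (hconn : comps s t A₂ B₂ = 1)
    (hm : comps s t A₁ B₁ = m) (hm2 : 2 ≤ m)
    (hrk : m = 2 → rkH1 s t A₁ B₁ + 1 ≤ rkH1 s t A₂ B₂)
    -- `k₁ > m` divides `k` and `G̃_{r-1}` has at most `(k/k₁)·m` components:
    (hk₁ : m < k₁) (hdvd : k₁ ∣ k)
    (hcomp' : comps s' t' (pV ⁻¹' A₁) (pE ⁻¹' B₁) ≤ (k / k₁) * m) :
    (k : ℤ) < rkH1 s' t' (pV ⁻¹' A₂) (pE ⁻¹' B₂) - rkH1 s' t' (pV ⁻¹' A₁) (pE ⁻¹' B₁) := by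
  classical
  set q := k / k₁ with hq
  -- basic numerics
  have hqk : q * k₁ = k := Nat.div_mul_cancel hdvd
  have hq1 : 1 ≤ q := by
    rcases Nat.eq_zero_or_pos q with h | h
    · rw [h, zero_mul] at hqk; omega
    · exact h
  have hqm : q * m + q ≤ k := by
    have h1 : q * (m + 1) ≤ q * k₁ := Nat.mul_le_mul_left q (by omega)
    rw [hqk] at h1
    calc q * m + q = q * (m + 1) := by ring
      _ ≤ k := h1
  -- `A₂` is nonempty
  have hA2ne : A₂.Nonempty := by
    have h1 := hconn
    unfold comps at h1
    obtain ⟨_, ⟨qq⟩⟩ := Nat.card_eq_one_iff_unique.mp h1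
    obtain ⟨a, -⟩ := Quot.exists_rep qq
    exact ⟨a, a.2⟩
  -- hence so is its preimage
  have hA2'ne : (pV ⁻¹' A₂).Nonempty := by
    obtain ⟨a, ha⟩ := hA2ne
    have h1 : Nat.card {x // pV x = a} = k := hfibV a
    have h2 : Nonempty {x // pV x = a} := by
      by_contra h
      rw [not_nonempty_iff] at h
      rw [Nat.card_of_isEmpty] at h1
      omega
    obtain ⟨x, hx⟩ := h2
    exact ⟨x, by simp [Set.mem_preimage, hx, ha]⟩
  -- the lifted cardinalities
  have hcA₁ : Nat.card (pV ⁻¹' A₁) = k * Nat.card A₁ := aux_card_preimage pV k hfibV A₁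
  have hcA₂ : Nat.card (pV ⁻¹' A₂) = k * Nat.card A₂ := aux_card_preimage pV k hfibV A₂
  have hcB₁ : Nat.card (pE ⁻¹' B₁) = k * Nat.card B₁ := aux_card_preimage pE k hfibE B₁
  have hcB₂ : Nat.card (pE ⁻¹' B₂) = k * Nat.card B₂ := aux_card_preimage pE k hfibE B₂
  -- components of the covering graph `G̃_r`
  have hc2' : 1 ≤ comps s' t' (pV ⁻¹' A₂) (pE ⁻¹' B₂) :=
    aux_comps_pos s' t' _ _ hA2'ne
  -- monotonicity downstairs
  have hv := aux_comps_vertex s t A₁ A₂ B₁ hA hcl₁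
  have he := aux_comps_mono s t A₂ B₁ B₂ hB hcl₂
  rw [hm] at hv
  rw [hconn] at he
  -- the key estimate `X ≥ 2`
  have hX : (2 : ℤ) ≤ ((Nat.card B₂ : ℤ) - Nat.card B₁) -
      ((Nat.card A₂ : ℤ) - Nat.card A₁) := by
    rcases eq_or_ne m 2 with hm' | hm'
    · have h1 := hrk hm'
      simp only [rkH1, hconn, hm, hm'] at h1
      push_cast at h1
      linarith
    · have h3 : (3 : ℕ) ≤ m := by omega
      have hv' : (comps s t A₂ B₁ : ℤ) + Nat.card A₁ = (m : ℤ) + Nat.card A₂ := by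
        exact_mod_cast congrArg (Nat.cast : ℕ → ℤ) hv
      have he' : (comps s t A₂ B₁ : ℤ) + Nat.card B₁ ≤ 1 + Nat.card B₂ := by
        exact_mod_cast he
      have h3' : (3 : ℤ) ≤ (m : ℤ) := by exact_mod_cast h3
      linarith
  -- final arithmetic
  have hmul : (k : ℤ) * 2 ≤ (k : ℤ) * (((Nat.card B₂ : ℤ) - Nat.card B₁) -
      ((Nat.card A₂ : ℤ) - Nat.card A₁)) :=
    mul_le_mul_of_nonneg_left hX (by positivity)
  have hc1' : (comps s' t' (pV ⁻¹' A₁) (pE ⁻¹' B₁) : ℤ) ≤ (q : ℤ) * m := by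
    exact_mod_cast hcomp'
  have hqm' : (q : ℤ) * m + q ≤ (k : ℤ) := by exact_mod_cast hqm
  have hq1' : (1 : ℤ) ≤ (q : ℤ) := by exact_mod_cast hq1
  have hc2'' : (1 : ℤ) ≤ (comps s' t' (pV ⁻¹' A₂) (pE ⁻¹' B₂) : ℤ) := by exact_mod_cast hc2'
  simp only [rkH1, hcA₁, hcA₂, hcB₁, hcB₂]
  push_cast
  nlinarith [hmul, hc1', hqm', hq1', hc2'']
end

section
/- Let T be a simplicial tree and h : T → T a simplicial map without fixed points such that for every edge E, the edge path h(E) crosses E at most in one direction (equivalently, every edge is 'preferred' by exactly one of its endpoints: the first edge of the geodesic [v, h(v)] starting at an endpoint v of E equals E for exactly one endpoint v of E). Then for any two vertices ṽ, w̃, the rays L(ṽ) and L(w̃) obtained by always following preferred edges have a common infinite end. -/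
/-- Combinatorial step of Proposition 5.4.3: let `T` be a simplicial tree and `h` a
fixed-point-free simplicial self-map such that every edge is "preferred" by exactly one
of its endpoints, where the preferred edge at `v` is the first edge of the geodesic
`[v, h v]` (encoded by a function `pref` sending `v` to the first vertex of that
geodesic).  Then for any two vertices `v, w` the preferred rays `L(v)` and `L(w)`
obtained by always following preferred edges have a common infinite end: their tails
coincide. -/
theorem stmt14 {V : Type*} (G : SimpleGraph V) (ht : G.IsTree)
    (h : V → V)
    (hsimp : ∀ u v, G.Adj u v → G.Adj (h u) (h v) ∨ h u = h v)
    (hnofix : ∀ v, h v ≠ v)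
    (pref : V → V)
    (hpref : ∀ v, G.Adj v (pref v) ∧ G.dist (pref v) (h v) + 1 = G.dist v (h v))
    (hexcl : ∀ u v, G.Adj u v → (pref u = v ↔ pref v ≠ u)) :
    ∀ v w : V, ∃ a b : ℕ, ∀ i : ℕ, pref^[a + i] v = pref^[b + i] w := by
  have hconn := ht.isConnected
  intro v w
  have key : ∀ n v, G.dist v w ≤ n → ∃ a b : ℕ, ∀ i, pref^[a+i] v = pref^[b+i] w := by
    intro n
    induction n with
    | zero =>
      intro v hv
      have : v = w := hconn.dist_eq_zero_iff.mp (Nat.le_zero.mp hv)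
      exact ⟨0, 0, fun i => by rw [this]⟩
    | succ n ih =>
      intro v hv
      by_cases hvw : G.dist v w ≤ n
      · exact ih v hvw
      have hne : v ≠ w := by
        intro e; subst e; simp [G.dist_self] at hvw
      obtain ⟨p, hp⟩ := (hconn v w).exists_walk_length_eq_dist
      cases p with
      | nil => exact absurd rfl hne
      | cons hadj q =>
        rename_i u
        -- dist u w ≤ n
        have hq : G.dist u w ≤ n := by
          have hle := SimpleGraph.dist_le q
          have : q.length + 1 = G.dist v w := by simpa using hp
          omega
        obtain ⟨a, b, hab⟩ := ih u hq
        by_cases hpv : pref v = u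
        · refine ⟨a + 1, b, fun i => ?_⟩
          have : pref^[a + 1 + i] v = pref^[a + i] (pref v) := by
            rw [show a + 1 + i = (a + i) + 1 by omega, Function.iterate_succ_apply]
          rw [this, hpv, hab]
        · have hpu : pref u = v := by
            by_contra hc
            exact hpv (((hexcl v u hadj).mpr) (by
              intro e; exact hc e))
          refine ⟨a, b + 1, fun i => ?_⟩
          have h1 : pref^[a + 1 + i] u = pref^[b + 1 + i] w := by
            have := hab (i + 1)
            rwa [show a + (i+1) = a + 1 + i by omega, show b + (i+1) = b + 1 + i by omega] at this
          have h2 : pref^[a + 1 + i] u = pref^[a + i] v := by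
            rw [show a + 1 + i = (a + i) + 1 by omega, Function.iterate_succ_apply, hpu]
          rw [← h2, h1]
  exact key (G.dist v w) v le_rfl
end
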